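/- Fix an integer a ≥ 2. Let A be the formal power series over ℚ with constant coefficient 0 and coefficient A_m = (a·m)! / (m! · ((a−1)·m + 1)!) of t^m for m ≥ 1, and let B be the formal power series with constant coefficient 0 and coefficient C(a·m − 1, m − 1) of t^m for m ≥ 1. Then B · (1 − (a−1) · A) = A in the ring of formal power series. -/

import Mathlib

/-!
With the Raney series `R_x = Σ_k x/(a k + x) · C(a k + x, k) tᵏ`, the Pascal-type recurrence
`R_{x+1} = R_x + t R_{x+a}` gives by induction `R_x R_y = R_{x+y}`, so `F = R_1 = 1 + A`
satisfies the Fuss–Catalan equation `F = 1 + t Fᵃ`. Differentiating it yields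
`t F' (a - (a-1) F) = F (F - 1)`. Since `C(a m, m) = ((a-1) m + 1) A_m = a C(a m - 1, m - 1)`,
the series `G = Σ C(a m, m) tᵐ = 1 + a B` equals `F + (a-1) t F'`, hence `G (a - (a-1) F) = F`;
subtracting `a - (a-1) F = 1 - (a-1) A` from both sides leaves `a` times the claimed identity.
-/

open PowerSeries

-- The `if` only matters at `x = k = 0`, where the formula would give `0 / 0 = 0` instead of `1`.
noncomputable def raney (a x k : ℕ) : ℚ :=
  if k = 0 then 1 else x / (a * k + x) * (a * k + x).choose k

@[simp] lemma raney_zero_right (a x : ℕ) : raney a x 0 = 1 := if_pos rfl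

lemma raney_zero_left (a : ℕ) {k : ℕ} (hk : k ≠ 0) : raney a 0 k = 0 := by
  simp [raney, hk]

lemma raney_of_ne_zero {a x k : ℕ} (h : a * k + x ≠ 0) :
    raney a x k = x / (a * k + x) * (a * k + x).choose k := by
  rcases Nat.eq_zero_or_pos k with rfl | hk
  · have : (x : ℚ) ≠ 0 := by simpa using h
    simp [this]
  · exact if_neg hk.ne'

lemma raney_succ_succ {a : ℕ} (ha : 0 < a) (x k : ℕ) :
    raney a (x + 1) (k + 1) = raney a x (k + 1) + raney a (x + a) k := by
  set N := a * (k + 1) + x with hN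
  have hN1 : a * (k + 1) + (x + 1) = N + 1 := by ring
  have hN' : a * k + (x + a) = N := by ring
  have hkN : k ≤ N := by nlinarith
  rw [raney_of_ne_zero (by omega), raney_of_ne_zero (by omega), raney_of_ne_zero (by omega),
    hN1, hN']
  have hsucc : ((N + 1).choose (k + 1) : ℚ) = (N + 1) * N.choose k / (k + 1) := by
    rw [eq_div_iff (by positivity)]
    exact_mod_cast (Nat.add_one_mul_choose_eq N k).symm
  have hright : (N.choose (k + 1) : ℚ) = N.choose k * (N - k) / (k + 1) := by
    rw [eq_div_iff (by positivity), ← Nat.cast_sub hkN]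
    exact_mod_cast Nat.choose_succ_right_eq N k
  have hNq : (N : ℚ) = a * (k + 1) + x := by simp [hN]
  push_cast
  rw [hsucc, hright]
  field_simp
  rw [hNq]
  ring

lemma mk_raney_zero (a : ℕ) : mk (raney a 0) = 1 := by
  ext k
  rcases k with _ | k
  · simp
  · simp [raney_zero_left a k.succ_ne_zero]

lemma mk_raney_succ {a : ℕ} (ha : 0 < a) (x : ℕ) :
    mk (raney a (x + 1)) = mk (raney a x) + X * mk (raney a (x + a)) := by
  ext k
  rcases k with _ | k
  · simp
  · simp [coeff_succ_X_mul, raney_succ_succ ha]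

lemma coeff_mul_mk_raney {a : ℕ} (ha : 0 < a) (n : ℕ) :
    ∀ x y, coeff n (mk (raney a x) * mk (raney a y)) = raney a (x + y) n := by
  induction n with
  | zero => simp
  | succ n ih =>
    intro x
    induction x with
    | zero => simp [mk_raney_zero]
    | succ x ihx =>
      intro y
      rw [mk_raney_succ ha, add_mul, map_add, mul_assoc, coeff_succ_X_mul, ihx, ih,
        add_right_comm x 1 y, raney_succ_succ ha, add_right_comm x a y]

lemma mk_raney_add {a : ℕ} (ha : 0 < a) (x y : ℕ) :
    mk (raney a (x + y)) = mk (raney a x) * mk (raney a y) := by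
  ext n
  rw [coeff_mul_mk_raney ha, coeff_mk]

lemma mk_raney_eq_pow {a : ℕ} (ha : 0 < a) (x : ℕ) : mk (raney a x) = mk (raney a 1) ^ x := by
  induction x with
  | zero => exact mk_raney_zero a
  | succ x ih => rw [mk_raney_add ha, ih, pow_succ]

lemma mk_raney_one {a : ℕ} (ha : 0 < a) : mk (raney a 1) = 1 + X * mk (raney a 1) ^ a := by
  rw [← mk_raney_eq_pow ha]
  simpa [mk_raney_zero] using mk_raney_succ ha 0

lemma X_mul_derivative_mul_eq_of_eq_one_add_X_mul_pow {R : Type*} [CommRing R] {F : R⟦X⟧}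
    {a : ℕ} (hF : F = 1 + X * F ^ a) :
    X * d⁄dX R F * ((a : R⟦X⟧) - ((a : R⟦X⟧) - 1) * F) = F * (F - 1) := by
  have hderiv : d⁄dX R F = F ^ a + X * ((a : R⟦X⟧) * F ^ (a - 1) * d⁄dX R F) := by
    conv_lhs => rw [hF]
    rw [map_add, derivative_one, Derivation.leibniz, derivative_X, derivative_pow, smul_eq_mul,
      smul_eq_mul]
    ring
  have hpow : (a : R⟦X⟧) * F ^ (a - 1) * F = (a : R⟦X⟧) * F ^ a := by
    rcases a with _ | a
    · simp
    · rw [mul_assoc, Nat.add_sub_cancel, ← pow_succ]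
  linear_combination
    (X * F) * hderiv + (X * X * d⁄dX R F) * hpow - ((a : R⟦X⟧) * X * d⁄dX R F + F) * hF

lemma mul_raney_one_eq_choose {a : ℕ} (ha : 0 < a) (n : ℕ) :
    (((a - 1) * n + 1 : ℕ) : ℚ) * raney a 1 n = (a * n).choose n := by
  obtain ⟨b, rfl⟩ : ∃ b, a = b + 1 := ⟨a - 1, by omega⟩
  have hsub : (b + 1) * n + 1 - n = b * n + 1 := by rw [add_one_mul]; omega
  have h : (((b + 1) * n).choose n : ℚ) * ((b + 1) * n + 1) =
      (((b + 1) * n + 1).choose n : ℚ) * (b * n + 1) := by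
    exact_mod_cast hsub ▸ Nat.choose_mul_succ_eq ((b + 1) * n) n
  rw [raney_of_ne_zero (by omega), Nat.add_sub_cancel]
  push_cast
  field_simp
  linear_combination -h

open Nat in
lemma raney_one_eq_factorial {a : ℕ} (ha : 0 < a) (n : ℕ) :
    raney a 1 n = (a * n)! / (n ! * ((a - 1) * n + 1)!) := by
  have h := mul_raney_one_eq_choose ha n
  rw [Nat.cast_choose ℚ (Nat.le_mul_of_pos_left n ha), ← Nat.sub_one_mul,
    eq_div_iff (by positivity)] at h
  rw [Nat.factorial_succ, Nat.cast_mul, eq_div_iff (by positivity)]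
  linear_combination h

lemma mul_choose_mul_sub_one {a : ℕ} (ha : 0 < a) (n : ℕ) :
    a * (a * (n + 1) - 1).choose n = (a * (n + 1)).choose (n + 1) := by
  have h := Nat.add_one_mul_choose_eq (a * (n + 1) - 1) n
  rw [Nat.sub_add_cancel (Nat.mul_pos ha (by omega))] at h
  apply Nat.eq_of_mul_eq_mul_right (show 0 < n + 1 by omega)
  rw [← h, mul_right_comm]

lemma mk_choose_eq {a : ℕ} (ha : 0 < a) :
    mk (fun n ↦ ((a * n).choose n : ℚ)) =
      mk (raney a 1) + C ((a : ℚ) - 1) * (X * d⁄dX ℚ (mk (raney a 1))) := by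
  ext n
  rcases n with _ | n
  · simp
  · rw [coeff_mk, map_add, coeff_C_mul, coeff_succ_X_mul, coeff_derivative, coeff_mk,
      ← mul_raney_one_eq_choose ha]
    push_cast [Nat.cast_sub ha]
    ring

lemma mk_choose_mul_one_sub_mul_eq {a : ℕ} (ha : 0 < a) :
    mk (fun n ↦ ((a * n).choose n : ℚ)) * (1 - C ((a : ℚ) - 1) * (mk (raney a 1) - 1)) =
      mk (raney a 1) := by
  have hF := X_mul_derivative_mul_eq_of_eq_one_add_X_mul_pow (mk_raney_one ha)
  have hC : C ((a : ℚ) - 1) = (a : ℚ⟦X⟧) - 1 := by simp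
  rw [mk_choose_eq ha, hC]
  linear_combination ((a : ℚ⟦X⟧) - 1) * hF

/-- With `A(t) = Σ_{m≥1} A_m t^m` the generating function of the Fuss–Catalan
numbers `A_m = (a·m)! / (m! · ((a−1)·m + 1)!)` and `B(t) = Σ_{m≥1} C(a·m−1, m−1) t^m`
the generating function of pyramid counts, one has `B·(1 − (a−1)·A) = A`. -/
theorem pyramid_genfun_relation (a : ℕ) (ha : 2 ≤ a)
    (A B : PowerSeries ℚ)
    (hA0 : PowerSeries.coeff 0 A = 0)
    (hA : ∀ m, 1 ≤ m → PowerSeries.coeff m A =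
      ((a * m).factorial : ℚ) /
        ((m.factorial : ℚ) * (((a - 1) * m + 1).factorial : ℚ)))
    (hB0 : PowerSeries.coeff 0 B = 0)
    (hB : ∀ m, 1 ≤ m → PowerSeries.coeff m B = ((a * m - 1).choose (m - 1) : ℚ)) :
    B * (1 - PowerSeries.C ((a : ℚ) - 1) * A) = A := by
  have ha' : 0 < a := by omega
  set F := mk (raney a 1)
  set G := mk (fun n ↦ ((a * n).choose n : ℚ))
  have hAF : A = F - 1 := by
    ext m
    rcases m with _ | m
    · simp [F, hA0]
    · simp [F, hA (m + 1) (by omega), raney_one_eq_factorial ha']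
  have hBG : C (a : ℚ) * B = G - 1 := by
    ext m
    rw [coeff_C_mul, map_sub, coeff_mk, coeff_one]
    rcases m with _ | m
    · simp [hB0]
    · rw [hB (m + 1) (by omega), Nat.add_sub_cancel, ← mul_choose_mul_sub_one ha']
      simp
  have hC : C (a : ℚ) = C ((a : ℚ) - 1) + 1 := by simp
  apply mul_left_cancel₀ ((map_ne_zero_iff _ C_injective).mpr (Nat.cast_ne_zero.mpr ha'.ne'))
  rw [hAF]
  linear_combination (1 - C ((a : ℚ) - 1) * (F - 1)) * hBG + mk_choose_mul_one_sub_mul_eq ha' -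
    (F - 1) * hC
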